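/- Let G1 be a connected δ1-regular graph on n vertices with δ1 ≥ 4, G2 be a connected δ2-regular graph on δ1 vertices, write κ1 = κ(G1), λ2 = λ(G2), λ2' = λ'(G2), and let G = G1®G2. Let F be a minimum restricted edge-cut of G and let {X1, X2, …, Xn} be the partition of V(G) into the n copies of G2 (so the subgraph induced by each Xi is isomorphic to G2). If for some i the induced subgraph G[Xi] is disconnected in G−F, then λ'(G) ≥ min{κ1+λ2−1, 2λ2, λ2'+2}. -/

import Mathlib

open SimpleGraph

section Defs

variable {V : Type*}

/-- The set of edges of `G` with one endpoint in `X` and the other outside `X`. -/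
def edgeBoundary (G : SimpleGraph V) (X : Set V) : Set (Sym2 V) :=
  {e | e ∈ G.edgeSet ∧ ∃ u ∈ X, ∃ v ∈ Xᶜ, e = s(u, v)}

/-- The edge-connectivity `λ(G)`: the minimum number of edges whose removal disconnects `G`. -/
noncomputable def edgeConn (G : SimpleGraph V) : ℕ :=
  sInf {k | ∃ F : Set (Sym2 V), F ⊆ G.edgeSet ∧ F.ncard = k ∧ ¬(G.deleteEdges F).Connected}

/-- `F` is a restricted edge-cut of `G`: removing `F` disconnects `G` and leaves no
isolated vertices. -/
def IsRestrictedEdgeCut (G : SimpleGraph V) (F : Set (Sym2 V)) : Prop :=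
  F ⊆ G.edgeSet ∧ ¬(G.deleteEdges F).Connected ∧ ∀ v : V, ∃ w : V, (G.deleteEdges F).Adj v w

/-- The restricted edge-connectivity `λ'(G)`. -/
noncomputable def restrictedEdgeConn (G : SimpleGraph V) : ℕ :=
  sInf {k | ∃ F : Set (Sym2 V), IsRestrictedEdgeCut G F ∧ F.ncard = k}

/-- The vertex-connectivity `κ(G)`: the minimum size of a set of vertices whose removal
leaves a disconnected graph or a graph with at most one vertex. -/
noncomputable def vertexConn (G : SimpleGraph V) : ℕ :=
  sInf {k | ∃ S : Set V, S.ncard = k ∧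
    (¬(G.induce (Sᶜ : Set V)).Connected ∨ (Sᶜ : Set V).ncard ≤ 1)}

/-- The minimum edge-degree `ξ(G) = min {d(u) + d(v) - 2 : uv ∈ E(G)}`. -/
noncomputable def minEdgeDegree (G : SimpleGraph V) : ℕ :=
  sInf {k | ∃ u v : V, G.Adj u v ∧ (G.neighborSet u).ncard + (G.neighborSet v).ncard - 2 = k}

/-- `G` is `λ'`-optimal if `λ'(G) = ξ(G)`. -/
def LambdaPrimeOptimal (G : SimpleGraph V) : Prop :=
  restrictedEdgeConn G = minEdgeDegree G

/-- The replacement product of `G1` and `G2` with respect to an edge-labelling `ℓ`,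
where `ℓ x i` is the other endpoint of the edge of `G1` labelled `i` at the vertex `x`.
Vertices `(x, i)` and `(y, j)` are adjacent iff either `x = y` and `i j ∈ E(G2)`, or
`x y ∈ E(G1)` and the edge `x y` is labelled `i` at `x` and `j` at `y`. -/
def replacementProduct {V1 V2 : Type*} (G1 : SimpleGraph V1) (G2 : SimpleGraph V2)
    (ℓ : V1 → V2 → V1) : SimpleGraph (V1 × V2) where
  Adj p q := (p.1 = q.1 ∧ G2.Adj p.2 q.2) ∨
    (G1.Adj p.1 q.1 ∧ ℓ p.1 p.2 = q.1 ∧ ℓ q.1 q.2 = p.1)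
  symm := by
    constructor
    rintro p q (⟨h1, h2⟩ | ⟨h1, h2, h3⟩)
    · exact Or.inl ⟨h1.symm, h2.symm⟩
    · exact Or.inr ⟨h1.symm, h3, h2⟩
  loopless := by
    constructor
    rintro p (⟨_, h⟩ | ⟨h, _⟩)
    · exact G2.irrefl h
    · exact G1.irrefl h

/-- `ℓ` is a valid edge-labelling of `G1` for the replacement product:
for each vertex `x`, `ℓ x` is injective and `ℓ x i` is always a neighbour of `x`
(hence `ℓ x` enumerates the neighbours of `x` when `G1` is `|V2|`-regular). -/
def IsRPLabelling {V1 V2 : Type*} (G1 : SimpleGraph V1) (ℓ : V1 → V2 → V1) : Prop :=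
  (∀ x, Function.Injective (ℓ x)) ∧ ∀ x i, G1.Adj x (ℓ x i)

end Defs

/-!
A minimum restricted edge-cut `F` of `G = G1 ® G2` is the edge boundary `∂C` of a set `C` of
vertices, and the copy `X_x` that `F` disconnects is split by `C`. Edges of `∂C` lying inside
different copies, or between copies, are different edges, so it suffices to count each kind.
If a second copy is split, the two split copies contribute `λ2` edges each. Otherwise every other
copy lies wholly inside or wholly outside `C`. If both kinds occur, then, together with `x`, they
partition `V1`, so at least `κ1 - 1` edges of `G1` join them; these lift to edges of `∂C` besides
the `λ2` edges inside `X_x`. If all other copies lie on one side, each vertex of `X_x` on the other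
side, forming `A`, sends its external edge across, and keeps a neighbour in `A` because `G - F`
has no isolated vertex. Then either the `G2`-boundary of `A` is a restricted edge-cut of `G2` and
`|A| ≥ 2`, or some vertex outside `A` has all its at least `λ2` neighbours in `A`.
-/

open Function

section Connectivity

variable {V : Type*} {G : SimpleGraph V} {X : Set V} {u v : V}

lemma mk_mem_edgeBoundary_iff : s(u, v) ∈ edgeBoundary G X ↔ G.Adj u v ∧ (u ∈ X ↔ v ∉ X) := by
  constructor
  · rintro ⟨he, a, ha, b, hb, heq⟩
    rcases Sym2.eq_iff.1 heq with ⟨rfl, rfl⟩ | ⟨rfl, rfl⟩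
    · exact ⟨he, iff_of_true ha hb⟩
    · exact ⟨he, iff_of_false hb (not_not_intro ha)⟩
  · rintro ⟨h, huv⟩
    by_cases hu : u ∈ X
    · exact ⟨h, u, hu, v, huv.1 hu, rfl⟩
    · exact ⟨h, v, not_not.1 (mt huv.2 hu), u, hu, Sym2.eq_swap⟩

lemma deleteEdges_edgeBoundary_adj :
    (G.deleteEdges (edgeBoundary G X)).Adj u v ↔ G.Adj u v ∧ (u ∈ X ↔ v ∈ X) := by
  rw [deleteEdges_adj, mk_mem_edgeBoundary_iff]
  tauto

lemma edgeBoundary_compl : edgeBoundary G Xᶜ = edgeBoundary G X := by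
  ext e
  induction e using Sym2.ind with
  | _ u v => simp only [mk_mem_edgeBoundary_iff, Set.mem_compl_iff]; tauto

lemma edgeBoundary_subset_edgeSet : edgeBoundary G X ⊆ G.edgeSet := fun _ he => he.1

lemma not_connected_deleteEdges_edgeBoundary (hu : u ∈ X) (hv : v ∉ X) :
    ¬(G.deleteEdges (edgeBoundary G X)).Connected := fun h => by
  obtain ⟨d, -, hd, hd'⟩ := (h.preconnected u v).some.exists_boundary_dart X hu hv
  exact hd' ((deleteEdges_edgeBoundary_adj.1 d.adj).2.1 hd)

lemma edgeConn_le_ncard_edgeBoundary (hu : u ∈ X) (hv : v ∉ X) :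
    edgeConn G ≤ (edgeBoundary G X).ncard :=
  Nat.sInf_le ⟨_, edgeBoundary_subset_edgeSet, rfl, not_connected_deleteEdges_edgeBoundary hu hv⟩

lemma restrictedEdgeConn_le_ncard_edgeBoundary (hu : u ∈ X) (hv : v ∉ X)
    (hX : ∀ w, ∃ w', G.Adj w w' ∧ (w ∈ X ↔ w' ∈ X)) :
    restrictedEdgeConn G ≤ (edgeBoundary G X).ncard :=
  Nat.sInf_le ⟨_, ⟨edgeBoundary_subset_edgeSet, not_connected_deleteEdges_edgeBoundary hu hv,
    fun w => (hX w).imp fun _ => deleteEdges_edgeBoundary_adj.2⟩, rfl⟩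

lemma ncard_edgeBoundary_singleton (v : V) :
    (edgeBoundary G {v}).ncard = (G.neighborSet v).ncard := by
  have : edgeBoundary G {v} = (fun w => s(v, w)) '' G.neighborSet v := by
    ext e
    induction e using Sym2.ind with
    | _ a b =>
      simp only [mk_mem_edgeBoundary_iff, Set.mem_singleton_iff, Set.mem_image,
        mem_neighborSet, Sym2.eq_iff]
      constructor
      · rintro ⟨h, hab⟩
        by_cases ha : a = v
        · exact ⟨b, ha ▸ h, Or.inl ⟨ha.symm, rfl⟩⟩
        · obtain rfl : b = v := not_not.1 (mt hab.2 ha)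
          exact ⟨a, h.symm, Or.inr ⟨rfl, rfl⟩⟩
      · rintro ⟨w, hw, ⟨rfl, rfl⟩ | ⟨rfl, rfl⟩⟩
        · exact ⟨hw, iff_of_true rfl hw.ne'⟩
        · exact ⟨hw.symm, iff_of_false hw.ne' (not_not_intro rfl)⟩
  rw [this, Set.ncard_image_of_injective _ fun _ _ => Sym2.congr_right.1]

lemma edgeConn_le_ncard_neighborSet (huv : u ≠ v) : edgeConn G ≤ (G.neighborSet u).ncard :=
  ncard_edgeBoundary_singleton (G := G) u ▸ edgeConn_le_ncard_edgeBoundary rfl huv.symm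

lemma IsRestrictedEdgeCut.edgeBoundary_reachable_eq [Finite V] {F : Set (Sym2 V)}
    (hF : IsRestrictedEdgeCut G F) (hmin : F.ncard = restrictedEdgeConn G) (u : V) :
    edgeBoundary G {v | (G.deleteEdges F).Reachable u v} = F := by
  set C := {v | (G.deleteEdges F).Reachable u v}
  have hsub : edgeBoundary G C ⊆ F := by
    rintro ⟨p, q⟩ he
    obtain ⟨hpq, hpq'⟩ := mk_mem_edgeBoundary_iff.1 he
    by_contra hF'
    have hreach : (G.deleteEdges F).Reachable p q := (deleteEdges_adj.2 ⟨hpq, hF'⟩).reachable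
    by_cases hp : p ∈ C
    · exact hpq'.1 hp (hp.trans hreach)
    · exact hp (not_not.1 (mt hpq'.2 hp) |>.trans hreach.symm)
  obtain ⟨w, hw⟩ : ∃ w, w ∉ C := by
    by_contra! hall
    exact hF.2.1 ((connected_iff_exists_forall_reachable _).2 ⟨u, hall⟩)
  have hcut : IsRestrictedEdgeCut G (edgeBoundary G C) :=
    ⟨edgeBoundary_subset_edgeSet, not_connected_deleteEdges_edgeBoundary (Reachable.refl u) hw,
      fun v => (hF.2.2 v).imp fun _ h => deleteEdges_anti hsub h⟩
  exact Set.eq_of_subset_of_ncard_le hsub (hmin ▸ Nat.sInf_le ⟨_, hcut, rfl⟩)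

lemma vertexConn_le_ncard_of_separates {S H : Set V} (hu : u ∈ H) (huS : u ∉ S) (hv : v ∉ H)
    (hvS : v ∉ S) (hsep : ∀ a b, G.Adj a b → a ∈ H → b ∉ H → a ∈ S ∨ b ∈ S) :
    vertexConn G ≤ S.ncard := by
  refine Nat.sInf_le ⟨S, rfl, Or.inl fun h => ?_⟩
  obtain ⟨d, -, hd, hd'⟩ := (h.preconnected ⟨u, huS⟩ ⟨v, hvS⟩).some.exists_boundary_dart
    {p | p.1 ∈ H} hu hv
  exact (hsep _ _ d.adj hd hd').elim d.toProd.1.2 d.toProd.2.2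

lemma vertexConn_le_card_sub_one [Finite V] (v : V) : vertexConn G ≤ Nat.card V - 1 := by
  have hcompl : ({v}ᶜ : Set V).ncard = Nat.card V - 1 := by
    rw [Set.ncard_compl, Set.ncard_singleton]
  exact hcompl ▸ Nat.sInf_le ⟨{v}ᶜ, rfl, Or.inr (by rw [compl_compl, Set.ncard_singleton])⟩

def edgesBetween (G : SimpleGraph V) (H₁ H₂ : Set V) : Set (Sym2 V) :=
  {e | e ∈ G.edgeSet ∧ ∃ a ∈ H₁, ∃ b ∈ H₂, e = s(a, b)}

lemma ncard_mul_ncard_le_ncard_edgesBetween [Finite V] {H₁ H₂ : Set V} (hdisj : Disjoint H₁ H₂)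
    (hadj : ∀ a ∈ H₁, ∀ b ∈ H₂, G.Adj a b) :
    H₁.ncard * H₂.ncard ≤ (edgesBetween G H₁ H₂).ncard := by
  have hinj : Set.InjOn (fun p : V × V => s(p.1, p.2)) (H₁ ×ˢ H₂) := by
    rintro ⟨a, b⟩ ⟨ha, hb⟩ ⟨a', b'⟩ ⟨ha', hb'⟩ heq
    rcases Sym2.eq_iff.1 heq with ⟨rfl, rfl⟩ | ⟨rfl, -⟩
    · rfl
    · exact (hdisj.notMem_of_mem_left ha hb').elim
  rw [← Set.ncard_prod, ← hinj.ncard_image]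
  refine Set.ncard_le_ncard ?_
  rintro _ ⟨⟨a, b⟩, ⟨ha, hb⟩, rfl⟩
  exact ⟨hadj a ha b hb, a, ha, b, hb, rfl⟩

/-- If some `u ∈ H₁` and `w ∈ H₂` are not adjacent, then `x` together with an endpoint other than
`u`, `w` of each edge between `H₁` and `H₂` separates `u` from `w`. Otherwise there are
`|H₁| |H₂| ≥ |V| - 2` such edges. -/
lemma vertexConn_le_ncard_edgesBetween_add_one [Finite V] {x : V} {H₁ H₂ : Set V}
    (hx₁ : x ∉ H₁) (hx₂ : x ∉ H₂) (hdisj : Disjoint H₁ H₂)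
    (hcover : ∀ y, y = x ∨ y ∈ H₁ ∨ y ∈ H₂) (hH₁ : H₁.Nonempty) (hH₂ : H₂.Nonempty) :
    vertexConn G ≤ (edgesBetween G H₁ H₂).ncard + 1 := by
  by_cases hcomplete : ∀ a ∈ H₁, ∀ b ∈ H₂, G.Adj a b
  · have hprod := ncard_mul_ncard_le_ncard_edgesBetween hdisj hcomplete
    have hcard : Nat.card V ≤ H₁.ncard + H₂.ncard + 1 := by
      rw [← Set.ncard_univ]
      calc Set.univ.ncard ≤ (insert x (H₁ ∪ H₂)).ncard :=
            Set.ncard_le_ncard fun y _ => (hcover y).imp id id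
        _ ≤ H₁.ncard + H₂.ncard + 1 :=
            (Set.ncard_insert_le _ _).trans (Nat.add_le_add_right (Set.ncard_union_le _ _) 1)
    have hmul : H₁.ncard + H₂.ncard ≤ H₁.ncard * H₂.ncard + 1 := by
      nlinarith [hH₁.ncard_pos, hH₂.ncard_pos]
    have := vertexConn_le_card_sub_one (G := G) x
    omega
  push Not at hcomplete
  obtain ⟨u, hu, w, hw, huw⟩ := hcomplete
  have hend : ∀ e ∈ edgesBetween G H₁ H₂, ∃ c ∈ e, c ≠ u ∧ c ≠ w := by
    rintro _ ⟨hab, a, ha, b, hb, rfl⟩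
    by_cases hau : a = u
    · subst hau
      exact ⟨b, Sym2.mem_mk_right a b, (hdisj.ne_of_mem ha hb).symm, fun h => huw (h ▸ hab)⟩
    · exact ⟨a, Sym2.mem_mk_left a b, hau, hdisj.ne_of_mem ha hw⟩
  have : Nonempty V := ⟨u⟩
  choose! f hf using hend
  refine (vertexConn_le_ncard_of_separates (S := insert x (f '' edgesBetween G H₁ H₂)) hu ?_
    (hdisj.notMem_of_mem_right hw) ?_ ?_).trans
    ((Set.ncard_insert_le _ _).trans (Nat.add_le_add_right (Set.ncard_image_le) 1))
  · rintro (rfl | ⟨e, he, hfe⟩)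
    exacts [hx₁ hu, (hf e he).2.1 hfe]
  · rintro (rfl | ⟨e, he, hfe⟩)
    exacts [hx₂ hw, (hf e he).2.2 hfe]
  · intro a b hab ha hb
    rcases hcover b with rfl | hb₁ | hb₂
    · exact Or.inr (Set.mem_insert _ _)
    · exact (hb hb₁).elim
    · have he : s(a, b) ∈ edgesBetween G H₁ H₂ := ⟨hab, a, ha, b, hb₂, rfl⟩
      rcases Sym2.mem_iff.1 (hf _ he).1 with h | h
      · exact Or.inl (Set.mem_insert_of_mem _ ⟨_, he, h⟩)
      · exact Or.inr (Set.mem_insert_of_mem _ ⟨_, he, h⟩)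

lemma min_le_ncard_edgeBoundary_add_ncard_compl [Finite V] (hu : u ∈ X) (hv : v ∉ X)
    (hXc : ∀ w ∉ X, ∃ w' ∉ X, G.Adj w w') :
    min (2 * edgeConn G) (restrictedEdgeConn G + 2) ≤ (edgeBoundary G X).ncard + Xᶜ.ncard := by
  have hcut := edgeConn_le_ncard_edgeBoundary (G := G) hu hv
  by_cases hX : ∀ c ∈ X, ∃ c' ∈ X, G.Adj c c'
  · have hrcut : restrictedEdgeConn G ≤ (edgeBoundary G X).ncard := by
      refine restrictedEdgeConn_le_ncard_edgeBoundary hu hv fun w => ?_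
      by_cases hw : w ∈ X
      · obtain ⟨w', hw', h⟩ := hX w hw
        exact ⟨w', h, iff_of_true hw hw'⟩
      · obtain ⟨w', hw', h⟩ := hXc w hw
        exact ⟨w', h, iff_of_false hw hw'⟩
    obtain ⟨v', hv', hvv'⟩ := hXc v hv
    have htwo : 1 < Xᶜ.ncard := (Set.one_lt_ncard (Set.toFinite _)).2 ⟨v, hv, v', hv', hvv'.ne⟩
    omega
  · push Not at hX
    obtain ⟨c, hc, hcX⟩ := hX
    have hdeg : (G.neighborSet c).ncard ≤ Xᶜ.ncard :=
      Set.ncard_le_ncard fun w hw hwX => hcX w hwX hw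
    have := edgeConn_le_ncard_neighborSet (G := G) (ne_of_mem_of_not_mem hc hv)
    omega

end Connectivity

lemma Set.ncard_add_ncard_le_of_disjoint {α : Type*} {s t u : Set α} (hst : Disjoint s t)
    (hs : s ⊆ u) (ht : t ⊆ u) (hu : u.Finite) : s.ncard + t.ncard ≤ u.ncard := by
  rw [← Set.ncard_union_eq hst (hu.subset hs) (hu.subset ht)]
  exact Set.ncard_le_ncard (Set.union_subset hs ht) hu

section ReplacementProduct

variable {V1 V2 : Type*} {G1 : SimpleGraph V1} {G2 : SimpleGraph V2} {ℓ : V1 → V2 → V1}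
  {C : Set (V1 × V2)} {x y : V1} {i j : V2}

lemma replacementProduct_adj_mk_same :
    (replacementProduct G1 G2 ℓ).Adj (x, i) (x, j) ↔ G2.Adj i j :=
  ⟨by rintro (⟨-, h⟩ | ⟨h, -⟩); exacts [h, (G1.loopless.irrefl x h).elim], fun h => Or.inl ⟨rfl, h⟩⟩

lemma exists_mem_and_exists_not_mem_of_not_connected_induce (hc2 : G2.Connected)
    (h : ¬(((replacementProduct G1 G2 ℓ).deleteEdges
      (edgeBoundary (replacementProduct G1 G2 ℓ) C)).induce {p | p.1 = x}).Connected) :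
    (∃ i, (x, i) ∈ C) ∧ ∃ j, (x, j) ∉ C := by
  by_contra! hC
  refine h (hc2.map ⟨fun i => ⟨(x, i), rfl⟩, fun {i j} hij => ?_⟩ ?_)
  · exact deleteEdges_edgeBoundary_adj.2 ⟨replacementProduct_adj_mk_same.2 hij,
      ⟨fun hi => hC ⟨i, hi⟩ j, fun hj => hC ⟨j, hj⟩ i⟩⟩
  · rintro ⟨⟨y, i⟩, rfl : y = x⟩
    exact ⟨i, rfl⟩

def fiberBoundary (G2 : SimpleGraph V2) (C : Set (V1 × V2)) (y : V1) : Set (Sym2 (V1 × V2)) :=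
  Sym2.map (Prod.mk y) '' edgeBoundary G2 {i | (y, i) ∈ C}

lemma fiberBoundary_subset_edgeBoundary :
    fiberBoundary G2 C y ⊆ edgeBoundary (replacementProduct G1 G2 ℓ) C := by
  rintro _ ⟨e, he, rfl⟩
  induction e using Sym2.ind with
  | _ i j =>
    obtain ⟨hij, hside⟩ := mk_mem_edgeBoundary_iff.1 he
    exact mk_mem_edgeBoundary_iff.2 ⟨replacementProduct_adj_mk_same.2 hij, hside⟩

lemma ncard_fiberBoundary :
    (fiberBoundary G2 C y).ncard = (edgeBoundary G2 {i | (y, i) ∈ C}).ncard :=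
  Set.ncard_image_of_injective _ (Sym2.map.injective (Prod.mk_right_injective y))

lemma edgeConn_le_ncard_fiberBoundary (hi : (y, i) ∈ C) (hj : (y, j) ∉ C) :
    edgeConn G2 ≤ (fiberBoundary G2 C y).ncard :=
  ncard_fiberBoundary.symm ▸ edgeConn_le_ncard_edgeBoundary (X := {i | (y, i) ∈ C}) hi hj

lemma map_fst_of_mem_fiberBoundary {e : Sym2 (V1 × V2)} (he : e ∈ fiberBoundary G2 C y) :
    Sym2.map Prod.fst e = s(y, y) := by
  obtain ⟨e, -, rfl⟩ := he
  induction e using Sym2.ind with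
  | _ i j => simp

lemma disjoint_fiberBoundary_of_ne (h : x ≠ y) :
    Disjoint (fiberBoundary G2 C x) (fiberBoundary G2 C y) :=
  Set.disjoint_left.2 fun _ hx hy => h <| by
    simpa using (map_fst_of_mem_fiberBoundary hx).symm.trans (map_fst_of_mem_fiberBoundary hy)

lemma IsRPLabelling.range_eq_neighborSet [Finite V1] (hℓ : IsRPLabelling G1 ℓ)
    (hdeg : ∀ y, (G1.neighborSet y).ncard = Nat.card V2) (y : V1) :
    Set.range (ℓ y) = G1.neighborSet y := by
  refine Set.eq_of_subset_of_ncard_le (Set.range_subset_iff.2 (hℓ.2 y)) ?_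
  rw [hdeg, Set.ncard_range_of_injective (hℓ.1 y)]

lemma two_mul_edgeConn_le_ncard_edgeBoundary [Finite V1] [Finite V2] {i' j' : V2} (hxy : x ≠ y)
    (hi : (x, i) ∈ C) (hj : (x, j) ∉ C) (hi' : (y, i') ∈ C) (hj' : (y, j') ∉ C) :
    2 * edgeConn G2 ≤ (edgeBoundary (replacementProduct G1 G2 ℓ) C).ncard := by
  have hcount : (fiberBoundary G2 C x).ncard + (fiberBoundary G2 C y).ncard ≤
      (edgeBoundary (replacementProduct G1 G2 ℓ) C).ncard :=
    Set.ncard_add_ncard_le_of_disjoint (disjoint_fiberBoundary_of_ne hxy)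
      fiberBoundary_subset_edgeBoundary fiberBoundary_subset_edgeBoundary (Set.toFinite _)
  have hx := edgeConn_le_ncard_fiberBoundary (G2 := G2) hi hj
  have hy := edgeConn_le_ncard_fiberBoundary (G2 := G2) hi' hj'
  omega

section ExtEdge

variable [Nonempty V2]

/-- The edge of `G1 ® G2` over the edge `yz` of `G1`; `invFun (ℓ y) z` is the label of `yz` at
`y`. -/
noncomputable def extEdge (ℓ : V1 → V2 → V1) : Sym2 V1 → Sym2 (V1 × V2) :=
  Sym2.lift ⟨fun y z => s((y, invFun (ℓ y) z), (z, invFun (ℓ z) y)), fun _ _ => Sym2.eq_swap⟩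

lemma extEdge_mk (y z : V1) :
    extEdge ℓ s(y, z) = s((y, invFun (ℓ y) z), (z, invFun (ℓ z) y)) := rfl

lemma map_fst_extEdge (e : Sym2 V1) : Sym2.map Prod.fst (extEdge ℓ e) = e := by
  induction e using Sym2.ind with
  | _ y z => simp [extEdge_mk]

lemma extEdge_injective : Injective (extEdge (V2 := V2) ℓ) :=
  LeftInverse.injective map_fst_extEdge

lemma disjoint_fiberBoundary_image_extEdge {E : Set (Sym2 V1)} (hE : E ⊆ G1.edgeSet) :
    Disjoint (fiberBoundary G2 C y) (extEdge ℓ '' E) := by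
  refine Set.disjoint_left.2 fun _ he ⟨e, heE, hext⟩ => G1.not_isDiag_of_mem_edgeSet (hE heE) ?_
  rw [← map_fst_extEdge (ℓ := ℓ) (V2 := V2) e, hext, map_fst_of_mem_fiberBoundary he]
  exact Sym2.mk_isDiag_iff.2 rfl

lemma IsRPLabelling.replacementProduct_adj_invFun [Finite V1] (hℓ : IsRPLabelling G1 ℓ)
    (hdeg : ∀ y, (G1.neighborSet y).ncard = Nat.card V2) {y z : V1} (h : G1.Adj y z) :
    (replacementProduct G1 G2 ℓ).Adj (y, invFun (ℓ y) z) (z, invFun (ℓ z) y) :=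
  Or.inr ⟨h, invFun_eq ((hℓ.range_eq_neighborSet hdeg y).ge h),
    invFun_eq ((hℓ.range_eq_neighborSet hdeg z).ge h.symm)⟩

lemma IsRPLabelling.extEdge_mem_edgeBoundary [Finite V1] (hℓ : IsRPLabelling G1 ℓ)
    (hdeg : ∀ y, (G1.neighborSet y).ncard = Nat.card V2) {y z : V1} (h : G1.Adj y z)
    (hside : (y, invFun (ℓ y) z) ∈ C ↔ (z, invFun (ℓ z) y) ∉ C) :
    extEdge ℓ s(y, z) ∈ edgeBoundary (replacementProduct G1 G2 ℓ) C :=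
  mk_mem_edgeBoundary_iff.2 ⟨hℓ.replacementProduct_adj_invFun hdeg h, hside⟩

lemma vertexConn_add_edgeConn_le_ncard_edgeBoundary_add_one [Finite V1] [Finite V2]
    (hℓ : IsRPLabelling G1 ℓ) (hdeg : ∀ y, (G1.neighborSet y).ncard = Nat.card V2)
    (hi : (x, i) ∈ C) (hj : (x, j) ∉ C) (hunsplit : ∀ y ≠ x, (∃ k, (y, k) ∈ C) → ∀ k, (y, k) ∈ C)
    {z : V1} (hy : y ≠ x) (hyC : ∀ k, (y, k) ∈ C) (hz : z ≠ x) (hzC : ∀ k, (z, k) ∉ C) :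
    vertexConn G1 + edgeConn G2 ≤ (edgeBoundary (replacementProduct G1 G2 ℓ) C).ncard + 1 := by
  set H₁ := {y | y ≠ x ∧ ∀ k, (y, k) ∈ C}
  set H₂ := {y | y ≠ x ∧ ∀ k, (y, k) ∉ C}
  have hcover : ∀ y, y = x ∨ y ∈ H₁ ∨ y ∈ H₂ := by
    intro y
    by_cases hyx : y = x
    · exact Or.inl hyx
    by_cases hk : ∃ k, (y, k) ∈ C
    · exact Or.inr (Or.inl ⟨hyx, hunsplit y hyx hk⟩)
    · exact Or.inr (Or.inr ⟨hyx, not_exists.1 hk⟩)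
  have hκ := vertexConn_le_ncard_edgesBetween_add_one (G := G1) (fun h => h.1 rfl)
    (fun h => h.1 rfl) (Set.disjoint_left.2 fun _ h₁ h₂ => h₂.2 i (h₁.2 i)) hcover
    ⟨y, hy, hyC⟩ ⟨z, hz, hzC⟩
  have hext :
      extEdge ℓ '' edgesBetween G1 H₁ H₂ ⊆ edgeBoundary (replacementProduct G1 G2 ℓ) C := by
    rintro _ ⟨_, ⟨hab, a, ha, b, hb, rfl⟩, rfl⟩
    exact hℓ.extEdge_mem_edgeBoundary hdeg hab (iff_of_true (ha.2 _) (hb.2 _))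
  have hcount := Set.ncard_add_ncard_le_of_disjoint
    (disjoint_fiberBoundary_image_extEdge fun _ he => he.1)
    (fiberBoundary_subset_edgeBoundary (y := x)) hext (Set.toFinite _)
  rw [Set.ncard_image_of_injective _ extEdge_injective] at hcount
  have := edgeConn_le_ncard_fiberBoundary (G2 := G2) hi hj
  omega

lemma min_le_ncard_edgeBoundary_of_forall_ne_mem [Finite V1] [Finite V2]
    (hℓ : IsRPLabelling G1 ℓ) (hdeg : ∀ y, (G1.neighborSet y).ncard = Nat.card V2)
    (hi : (x, i) ∈ C) (hj : (x, j) ∉ C) (hC : ∀ y ≠ x, ∀ k, (y, k) ∈ C)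
    (hiso : ∀ p, ∃ q, ((replacementProduct G1 G2 ℓ).deleteEdges
      (edgeBoundary (replacementProduct G1 G2 ℓ) C)).Adj p q) :
    min (2 * edgeConn G2) (restrictedEdgeConn G2 + 2) ≤
      (edgeBoundary (replacementProduct G1 G2 ℓ) C).ncard := by
  set A := {k | (x, k) ∈ C}
  have hAc : ∀ b ∉ A, ∃ b' ∉ A, G2.Adj b b' := by
    intro b hb
    obtain ⟨⟨y, b'⟩, hq⟩ := hiso (x, b)
    obtain ⟨hadj, hside⟩ := deleteEdges_edgeBoundary_adj.1 hq
    have hb' : (y, b') ∉ C := fun h => hb (hside.2 h)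
    obtain rfl : y = x := by_contra fun hy => hb' (hC y hy b')
    exact ⟨b', hb', replacementProduct_adj_mk_same.1 hadj⟩
  have hmin := min_le_ncard_edgeBoundary_add_ncard_compl (G := G2) (X := A) hi hj hAc
  set E := (fun b => s(x, ℓ x b)) '' Aᶜ
  have hEcard : (extEdge ℓ '' E).ncard = Aᶜ.ncard := by
    rw [Set.ncard_image_of_injective _ extEdge_injective,
      Set.ncard_image_of_injective _ fun b b' h => hℓ.1 x (Sym2.congr_right.1 h)]
  have hext : extEdge ℓ '' E ⊆ edgeBoundary (replacementProduct G1 G2 ℓ) C := by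
    rintro _ ⟨_, ⟨b, hb, rfl⟩, rfl⟩
    refine hℓ.extEdge_mem_edgeBoundary hdeg (hℓ.2 x b) ?_
    rw [leftInverse_invFun (hℓ.1 x) b]
    exact iff_of_false hb (not_not_intro (hC _ (hℓ.2 x b).ne' _))
  have hcount := Set.ncard_add_ncard_le_of_disjoint
    (disjoint_fiberBoundary_image_extEdge (E := E) (by rintro _ ⟨b, -, rfl⟩; exact hℓ.2 x b))
    (fiberBoundary_subset_edgeBoundary (y := x)) hext (Set.toFinite _)
  rw [ncard_fiberBoundary, hEcard] at hcount
  exact hmin.trans hcount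

end ExtEdge

end ReplacementProduct

theorem restrictedEdgeConn_replacementProduct_lower_of_copy_disconnected_general
    {V1 V2 : Type*} [Fintype V1] [Fintype V2] {δ1 : ℕ}
    (G1 : SimpleGraph V1) (G2 : SimpleGraph V2) (ℓ : V1 → V2 → V1)
    (hℓ : IsRPLabelling G1 ℓ)
    (hc2 : G2.Connected)
    (hr1 : ∀ x : V1, (G1.neighborSet x).ncard = δ1)
    (hd : Fintype.card V2 = δ1)
    (F : Set (Sym2 (V1 × V2)))
    (hF : IsRestrictedEdgeCut (replacementProduct G1 G2 ℓ) F)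
    (hFmin : F.ncard = restrictedEdgeConn (replacementProduct G1 G2 ℓ))
    (hdisc : ∃ x : V1, ¬(((replacementProduct G1 G2 ℓ).deleteEdges F).induce
      {p : V1 × V2 | p.1 = x}).Connected) :
    min (min (vertexConn G1 + edgeConn G2 - 1) (2 * edgeConn G2))
        (restrictedEdgeConn G2 + 2)
      ≤ restrictedEdgeConn (replacementProduct G1 G2 ℓ) := by
  have : Nonempty V2 := hc2.nonempty
  have hdeg : ∀ y, (G1.neighborSet y).ncard = Nat.card V2 := by
    simp [hr1, Nat.card_eq_fintype_card, hd]
  obtain ⟨x, hx⟩ := hdisc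
  obtain ⟨C, rfl⟩ : ∃ C, edgeBoundary (replacementProduct G1 G2 ℓ) C = F :=
    ⟨_, hF.edgeBoundary_reachable_eq hFmin (x, Classical.arbitrary V2)⟩
  rw [← hFmin]
  obtain ⟨⟨i, hi⟩, j, hj⟩ := exists_mem_and_exists_not_mem_of_not_connected_induce hc2 hx
  by_cases hsplit : ∃ y ≠ x, (∃ i, (y, i) ∈ C) ∧ ∃ j, (y, j) ∉ C
  · obtain ⟨y, hyx, ⟨i', hi'⟩, j', hj'⟩ := hsplit
    have := two_mul_edgeConn_le_ncard_edgeBoundary (G1 := G1) (G2 := G2) (ℓ := ℓ)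
      (Ne.symm hyx) hi hj hi' hj'
    omega
  push Not at hsplit
  by_cases hout : ∃ z ≠ x, ∀ k, (z, k) ∉ C
  · by_cases hin : ∃ y ≠ x, ∀ k, (y, k) ∈ C
    · obtain ⟨y, hy, hyC⟩ := hin
      obtain ⟨z, hz, hzC⟩ := hout
      have := vertexConn_add_edgeConn_le_ncard_edgeBoundary_add_one (G2 := G2) hℓ hdeg hi hj
        hsplit hy hyC hz hzC
      omega
    · push Not at hin
      have hCc : ∀ y ≠ x, ∀ k, (y, k) ∈ Cᶜ := fun y hy k hk =>
        (hin y hy).elim fun k' hk' => hk' (hsplit y hy ⟨k, hk⟩ k')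
      have := min_le_ncard_edgeBoundary_of_forall_ne_mem (C := Cᶜ) hℓ hdeg hj (not_not_intro hi)
        hCc (edgeBoundary_compl (G := replacementProduct G1 G2 ℓ) ▸ hF.2.2)
      rw [edgeBoundary_compl] at this
      omega
  · push Not at hout
    have := min_le_ncard_edgeBoundary_of_forall_ne_mem hℓ hdeg hi hj
      (fun y hy => hsplit y hy (hout y hy)) hF.2.2
    omega

/-- Lemma 4.3. Let `G1` be a connected `δ1`-regular graph on `n` vertices
with `δ1 ≥ 4`, `G2` a connected `δ2`-regular graph on `δ1` vertices, and
`G = G1 ® G2`. Let `F` be a minimum restricted edge-cut of `G`. If for some vertex `x` of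
`G1` the copy `{x} × V(G2)` of `G2` induces a disconnected subgraph of `G - F`, then
`λ'(G) ≥ min {κ1 + λ2 - 1, 2·λ2, λ2' + 2}`. -/
theorem restrictedEdgeConn_replacementProduct_lower_of_copy_disconnected
    {V1 V2 : Type*} [Fintype V1] [Fintype V2] {n δ1 δ2 : ℕ}
    (G1 : SimpleGraph V1) (G2 : SimpleGraph V2) (ℓ : V1 → V2 → V1)
    (hℓ : IsRPLabelling G1 ℓ)
    (hc1 : G1.Connected) (hc2 : G2.Connected)
    (hr1 : ∀ x : V1, (G1.neighborSet x).ncard = δ1)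
    (hr2 : ∀ i : V2, (G2.neighborSet i).ncard = δ2)
    (hn : Fintype.card V1 = n) (hd : Fintype.card V2 = δ1)
    (hδ1 : 4 ≤ δ1)
    (F : Set (Sym2 (V1 × V2)))
    (hF : IsRestrictedEdgeCut (replacementProduct G1 G2 ℓ) F)
    (hFmin : F.ncard = restrictedEdgeConn (replacementProduct G1 G2 ℓ))
    (hdisc : ∃ x : V1, ¬(((replacementProduct G1 G2 ℓ).deleteEdges F).induce
      {p : V1 × V2 | p.1 = x}).Connected) :
    min (min (vertexConn G1 + edgeConn G2 - 1) (2 * edgeConn G2))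
        (restrictedEdgeConn G2 + 2)
      ≤ restrictedEdgeConn (replacementProduct G1 G2 ℓ) :=
  restrictedEdgeConn_replacementProduct_lower_of_copy_disconnected_general G1 G2 ℓ hℓ hc2 hr1 hd F
    hF hFmin hdisc
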